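/- arXiv:0802.3922 — 8 statements merged into one kernel-verified Lean document; each statement's English description precedes it below -/
import Mathlib

section
/- Let X_1,...,X_m be nonempty closed convex subsets of R^n whose intersection X contains a closed ball of radius δ > 0 centered at x̄. Let x^1,...,x^m with x^i ∈ X_i, let x̂ = (1/m)∑ x^i, let ε = ∑_j dist(x̂, X_j), and define s = (ε/(ε+δ)) x̄ + (δ/(ε+δ)) x̂. Then s belongs to the intersection X. -/
theorem stmt2 {n m : ℕ} (hm : 0 < m) (X : Fin m → Set (EuclideanSpace ℝ (Fin n)))
    (hne : ∀ i, (X i).Nonempty) (hcl : ∀ i, IsClosed (X i)) (hconv : ∀ i, Convex ℝ (X i))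
    (δ : ℝ) (hδ : 0 < δ) (xbar : EuclideanSpace ℝ (Fin n))
    (hball : Metric.closedBall xbar δ ⊆ ⋂ i, X i)
    (x : Fin m → EuclideanSpace ℝ (Fin n)) (hx : ∀ i, x i ∈ X i)
    (xhat : EuclideanSpace ℝ (Fin n)) (hxhat : xhat = (m : ℝ)⁻¹ • ∑ i, x i)
    (ε : ℝ) (hε : ε = ∑ j, Metric.infDist xhat (X j))
    (s : EuclideanSpace ℝ (Fin n))
    (hs : s = (ε / (ε + δ)) • xbar + (δ / (ε + δ)) • xhat) :
    s ∈ ⋂ i, X i := by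
  have hεnn : 0 ≤ ε := by
    rw [hε]; exact Finset.sum_nonneg fun j _ => Metric.infDist_nonneg
  have hdi : ∀ i, Metric.infDist xhat (X i) ≤ ε := by
    intro i
    rw [hε]
    exact Finset.single_le_sum (fun j _ => Metric.infDist_nonneg) (Finset.mem_univ i)
  rcases eq_or_lt_of_le hεnn with hε0 | hεpos
  · -- ε = 0, s = xhat and xhat ∈ each X i
    have hsx : s = xhat := by
      rw [hs, ← hε0]
      simp [hδ.ne']
    rw [hsx]
    rw [Set.mem_iInter]
    intro i
    have : Metric.infDist xhat (X i) = 0 :=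
      le_antisymm (by rw [← hε0] at hdi; exact hdi i) Metric.infDist_nonneg

    have hm : xhat ∈ closure (X i) := by
      rw [Metric.mem_closure_iff_infDist_zero (hne i)] at *
      exact ‹Metric.infDist xhat (X i) = 0›
    rwa [(hcl i).closure_eq] at hm
  · rw [Set.mem_iInter]
    intro i
    obtain ⟨p, hpX, hpd⟩ := (hcl i).exists_infDist_eq_dist (hne i) xhat
    set d := Metric.infDist xhat (X i) with hd
    have hdle : d ≤ ε := hdi i
    have hdnn : 0 ≤ d := Metric.infDist_nonneg
    set y : EuclideanSpace ℝ (Fin n) := xbar + (δ / ε) • (xhat - p) with hy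
    have hyball : y ∈ Metric.closedBall xbar δ := by
      rw [Metric.mem_closedBall, dist_eq_norm]
      have : y - xbar = (δ / ε) • (xhat - p) := by rw [hy]; abel
      rw [this, norm_smul]
      have h1 : ‖xhat - p‖ = d := by
        rw [hpd, dist_eq_norm]
      rw [h1, Real.norm_eq_abs, abs_of_nonneg (div_nonneg hδ.le hεnn)]
      calc δ / ε * d ≤ δ / ε * ε := by
            exact mul_le_mul_of_nonneg_left hdle (div_nonneg hδ.le hεnn)
        _ = δ := by field_simp
    have hyX : y ∈ X i := by
      have := hball hyball
      rw [Set.mem_iInter] at this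
      exact this i
    have ha : (0:ℝ) ≤ ε / (ε + δ) := div_nonneg hεnn (by linarith)
    have hb : (0:ℝ) ≤ δ / (ε + δ) := div_nonneg hδ.le (by linarith)
    have hab : ε / (ε + δ) + δ / (ε + δ) = 1 := by
      field_simp
    have hsc : s = (ε / (ε + δ)) • y + (δ / (ε + δ)) • p := by
      rw [hs, hy, smul_add, smul_smul, smul_sub]
      have hεδ : ε + δ ≠ 0 := by positivity
      have : ε / (ε + δ) * (δ / ε) = δ / (ε + δ) := by
        field_simp
      rw [this]
      abel
    rw [hsc]
    exact hconv i hyX hpX ha hb hab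
end

section
/- Let X_1,...,X_m be nonempty closed convex subsets of R^n whose intersection X contains a closed ball of radius δ > 0 centered at x̄. Let x^i ∈ X_i and x̂ = (1/m)∑ x^i. Then dist(x̂, X) ≤ (1/(δm)) (∑_j ||x^j - x̄||)(∑_j dist(x̂, X_j)). -/
/-!
If `x̂` is within `D` of every `X_i` (take `D = ∑ dist(x̂, X_j)`), then the point `z` reached from
`x̂` by moving the fraction `D / (D + δ)` of the way towards `x̄` lies in every `X_i`: it is a
convex combination of a near point `p ∈ X_i` and a point of the ball `B(x̄, δ) ⊆ X_i`. Hence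
`dist(x̂, X) ≤ ‖x̂ - z‖ ≤ (D / δ) ‖x̂ - x̄‖`, and the triangle inequality bounds `‖x̂ - x̄‖` by the
average of the `‖x^j - x̄‖`.
-/

open Metric Set Filter Topology AffineMap

section

variable {E : Type*} [SeminormedAddCommGroup E] [NormedSpace ℝ E]

theorem Convex.lineMap_mem_of_closedBall_subset {C : Set E} (hC : Convex ℝ C) {c y p : E}
    {δ D : ℝ} (hball : closedBall c δ ⊆ C) (hδ : 0 < δ) (hD : 0 < D) (hp : p ∈ C)
    (hyp : dist y p ≤ D) : lineMap y c (D / (D + δ)) ∈ C := by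
  set t := D / (D + δ)
  have ht₀ : 0 ≤ t := by positivity
  have ht₁ : t ≤ 1 := div_le_one_of_le₀ (by linarith) (by positivity)
  have ht : t * (δ / D) = 1 - t := by simp only [t]; field_simp; ring
  clear_value t
  -- The point lies on the segment from `p` to `q`, the centre shifted by `(δ / D) • (y - p)`.
  set q := c + (δ / D) • (y - p)
  have hq : q ∈ C := hball <| by
    rw [mem_closedBall, dist_eq_norm, add_sub_cancel_left, norm_smul, Real.norm_of_nonneg
      (by positivity), ← dist_eq_norm]
    calc δ / D * dist y p ≤ δ / D * D := by gcongr
      _ = δ := div_mul_cancel₀ δ hD.ne'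
  have hmem : lineMap p q t ∈ C := hC.lineMap_mem hp hq ⟨ht₀, ht₁⟩
  convert hmem using 1
  simp only [lineMap_apply_module, q]
  linear_combination (norm := module) ht.symm • (y - p)

theorem infDist_iInter_le_of_closedBall_subset {ι : Type*} {X : ι → Set E}
    (hconv : ∀ i, Convex ℝ (X i)) {c : E} {δ : ℝ} (hδ : 0 < δ) (hball : closedBall c δ ⊆ ⋂ i, X i)
    (y : E) {D : ℝ} (hD₀ : 0 ≤ D) (hD : ∀ i, infDist y (X i) ≤ D) :
    infDist y (⋂ i, X i) ≤ D / δ * ‖y - c‖ := by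
  have hball_i (i : ι) : closedBall c δ ⊆ X i := hball.trans (iInter_subset X i)
  -- The sets need not be closed, so we work with every `D' > D` and pass to the limit.
  have key : ∀ D' > D, infDist y (⋂ i, X i) ≤ D' / δ * ‖y - c‖ := by
    intro D' hD'
    have hD'₀ : 0 < D' := hD₀.trans_lt hD'
    have hmem : lineMap y c (D' / (D' + δ)) ∈ ⋂ i, X i := mem_iInter.2 fun i => by
      obtain ⟨p, hp, hyp⟩ := (infDist_lt_iff ⟨c, hball_i i (mem_closedBall_self hδ.le)⟩).1
        ((hD i).trans_lt hD')
      exact (hconv i).lineMap_mem_of_closedBall_subset (hball_i i) hδ hD'₀ hp hyp.le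
    calc infDist y (⋂ i, X i) ≤ dist (lineMap y c (D' / (D' + δ))) y := by
          rw [dist_comm]; exact infDist_le_dist_of_mem hmem
      _ = D' / (D' + δ) * ‖y - c‖ := by
          rw [dist_lineMap_left, Real.norm_of_nonneg (by positivity), dist_eq_norm]
      _ ≤ D' / δ * ‖y - c‖ := by
          gcongr
          linarith
  have hlim : Tendsto (fun D' => D' / δ * ‖y - c‖) (𝓝[>] D) (𝓝 (D / δ * ‖y - c‖)) :=
    ((continuous_id.div_const δ).mul_const _).continuousAt.tendsto.mono_left nhdsWithin_le_nhds
  exact ge_of_tendsto hlim (eventually_nhdsWithin_of_forall key)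

theorem norm_inv_card_smul_sum_sub_le {m : ℕ} (hm : 0 < m) (x : Fin m → E) (c : E) :
    ‖(m : ℝ)⁻¹ • ∑ i, x i - c‖ ≤ (m : ℝ)⁻¹ * ∑ i, ‖x i - c‖ := by
  have hm' : (m : ℝ) ≠ 0 := by positivity
  have hsum : (m : ℝ)⁻¹ • ∑ i, x i - c = (m : ℝ)⁻¹ • ∑ i, (x i - c) := by
    rw [Finset.sum_sub_distrib, Finset.sum_const, Finset.card_univ, Fintype.card_fin,
      ← Nat.cast_smul_eq_nsmul ℝ, smul_sub, smul_smul, inv_mul_cancel₀ hm', one_smul]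
  rw [hsum, norm_smul, Real.norm_of_nonneg (by positivity)]
  gcongr
  exact norm_sum_le _ _

end

theorem stmt3_general {n m : ℕ} (hm : 0 < m) (X : Fin m → Set (EuclideanSpace ℝ (Fin n)))
    (hconv : ∀ i, Convex ℝ (X i))
    (δ : ℝ) (hδ : 0 < δ) (xbar : EuclideanSpace ℝ (Fin n))
    (hball : Metric.closedBall xbar δ ⊆ ⋂ i, X i)
    (x : Fin m → EuclideanSpace ℝ (Fin n))
    (xhat : EuclideanSpace ℝ (Fin n)) (hxhat : xhat = (m : ℝ)⁻¹ • ∑ i, x i) :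
    Metric.infDist xhat (⋂ i, X i) ≤
      (1 / (δ * m)) * (∑ j, ‖x j - xbar‖) * (∑ j, Metric.infDist xhat (X j)) := by
  set D := ∑ j, infDist xhat (X j)
  have hD₀ : 0 ≤ D := Finset.sum_nonneg fun j _ => infDist_nonneg
  have hD (i : Fin m) : infDist xhat (X i) ≤ D :=
    Finset.single_le_sum (fun j _ => infDist_nonneg) (Finset.mem_univ i)
  calc infDist xhat (⋂ i, X i) ≤ D / δ * ‖xhat - xbar‖ :=
        infDist_iInter_le_of_closedBall_subset hconv hδ hball xhat hD₀ hD
    _ ≤ D / δ * ((m : ℝ)⁻¹ * ∑ j, ‖x j - xbar‖) := by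
        gcongr
        exact hxhat ▸ norm_inv_card_smul_sum_sub_le hm x xbar
    _ = 1 / (δ * m) * (∑ j, ‖x j - xbar‖) * D := by ring

theorem stmt3 {n m : ℕ} (hm : 0 < m) (X : Fin m → Set (EuclideanSpace ℝ (Fin n)))
    (hne : ∀ i, (X i).Nonempty) (hcl : ∀ i, IsClosed (X i)) (hconv : ∀ i, Convex ℝ (X i))
    (δ : ℝ) (hδ : 0 < δ) (xbar : EuclideanSpace ℝ (Fin n))
    (hball : Metric.closedBall xbar δ ⊆ ⋂ i, X i)
    (x : Fin m → EuclideanSpace ℝ (Fin n)) (hx : ∀ i, x i ∈ X i)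
    (xhat : EuclideanSpace ℝ (Fin n)) (hxhat : xhat = (m : ℝ)⁻¹ • ∑ i, x i) :
    Metric.infDist xhat (⋂ i, X i) ≤
      (1 / (δ * m)) * (∑ j, ‖x j - xbar‖) * (∑ j, Metric.infDist xhat (X j)) :=
  stmt3_general hm X hconv δ hδ xbar hball x xhat hxhat
end

section
/- Let X_1,...,X_m be nonempty closed convex sets in R^n with nonempty intersection X. With doubly stochastic nonnegative weights a^i_j, vectors x^i ∈ R^n, w^i = ∑_j a^i_j x^j, and updated vectors x^i_+ = P_{X_i}[w^i], we have for every x ∈ X: ∑_i ||x^i_+ - x|| ≤ ∑_i ||x^i - x||. -/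
open Finset

/-- The angle at `p` in the triangle `w p z` is obtuse, so `w z` is its longest side. -/
theorem norm_sub_le_of_isNearest {E : Type*} [NormedAddCommGroup E] [InnerProductSpace ℝ E]
    {K : Set E} (hK : Convex ℝ K) {w p : E} (hp : p ∈ K) (hmin : ∀ y ∈ K, ‖w - p‖ ≤ ‖w - y‖)
    {z : E} (hz : z ∈ K) : ‖p - z‖ ≤ ‖w - z‖ := by
  have : Nonempty K := ⟨⟨p, hp⟩⟩
  have hinf : ‖w - p‖ = ⨅ y : K, ‖w - y‖ :=
    le_antisymm (le_ciInf fun y => hmin y y.2)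
      (ciInf_le ⟨0, Set.forall_mem_range.2 fun _ => norm_nonneg _⟩ (⟨p, hp⟩ : K))
  have hobtuse : inner ℝ (w - p) (z - p) ≤ 0 :=
    (norm_eq_iInf_iff_real_inner_le_zero hK hp).mp hinf z hz
  have hsq : ‖w - z‖ ^ 2 = ‖w - p‖ ^ 2 + ‖p - z‖ ^ 2 - 2 * inner ℝ (w - p) (z - p) := by
    rw [show w - z = (w - p) - (z - p) by abel, norm_sub_sq_real, norm_sub_rev z p]
    ring
  refine (pow_le_pow_iff_left₀ (norm_nonneg _) (norm_nonneg _) two_ne_zero).1 ?_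
  nlinarith [sq_nonneg ‖w - p‖]

theorem norm_sum_smul_sub_le {ι E : Type*} [SeminormedAddCommGroup E] [NormedSpace ℝ E]
    (s : Finset ι) {a : ι → ℝ} (ha : ∀ j ∈ s, 0 ≤ a j) (hsum : ∑ j ∈ s, a j = 1)
    (x : ι → E) (z : E) : ‖∑ j ∈ s, a j • x j - z‖ ≤ ∑ j ∈ s, a j * ‖x j - z‖ := by
  have hcomb : ∑ j ∈ s, a j • x j - z = ∑ j ∈ s, a j • (x j - z) := by
    simp only [smul_sub, sum_sub_distrib, ← sum_smul, hsum, one_smul]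
  calc ‖∑ j ∈ s, a j • x j - z‖ = ‖∑ j ∈ s, a j • (x j - z)‖ := by rw [hcomb]
    _ ≤ ∑ j ∈ s, ‖a j • (x j - z)‖ := norm_sum_le _ _
    _ = ∑ j ∈ s, a j * ‖x j - z‖ := sum_congr rfl fun j hj => by
        rw [norm_smul, Real.norm_of_nonneg (ha j hj)]

theorem stmt5_general {n m : ℕ} (X : Fin m → Set (EuclideanSpace ℝ (Fin n)))
    (hconv : ∀ i, Convex ℝ (X i))
    (a : Fin m → Fin m → ℝ) (hnonneg : ∀ i j, 0 ≤ a i j)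
    (hrow : ∀ i, ∑ j, a i j = 1) (hcol : ∀ j, ∑ i, a i j = 1)
    (x w xplus : Fin m → EuclideanSpace ℝ (Fin n))
    (hw : ∀ i, w i = ∑ j, a i j • x j)
    (hproj : ∀ i, xplus i ∈ X i ∧ ∀ y ∈ X i, ‖w i - xplus i‖ ≤ ‖w i - y‖) :
    ∀ z ∈ ⋂ i, X i, ∑ i, ‖xplus i - z‖ ≤ ∑ i, ‖x i - z‖ := by
  intro z hz
  rw [Set.mem_iInter] at hz
  have hstep : ∀ i, ‖xplus i - z‖ ≤ ∑ j, a i j * ‖x j - z‖ := fun i =>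
    calc ‖xplus i - z‖ ≤ ‖w i - z‖ :=
          norm_sub_le_of_isNearest (hconv i) (hproj i).1 (hproj i).2 (hz i)
      _ ≤ ∑ j, a i j * ‖x j - z‖ := by
          rw [hw i]; exact norm_sum_smul_sub_le _ (fun j _ => hnonneg i j) (hrow i) x z
  calc ∑ i, ‖xplus i - z‖ ≤ ∑ i, ∑ j, a i j * ‖x j - z‖ := sum_le_sum fun i _ => hstep i
    _ = ∑ j, ‖x j - z‖ := by simp only [sum_comm (γ := Fin m), ← sum_mul, hcol, one_mul]

theorem stmt5 {n m : ℕ} (X : Fin m → Set (EuclideanSpace ℝ (Fin n)))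
    (hne : ∀ i, (X i).Nonempty) (hcl : ∀ i, IsClosed (X i)) (hconv : ∀ i, Convex ℝ (X i))
    (hXne : (⋂ i, X i).Nonempty)
    (a : Fin m → Fin m → ℝ) (hnonneg : ∀ i j, 0 ≤ a i j)
    (hrow : ∀ i, ∑ j, a i j = 1) (hcol : ∀ j, ∑ i, a i j = 1)
    (x w xplus : Fin m → EuclideanSpace ℝ (Fin n))
    (hw : ∀ i, w i = ∑ j, a i j • x j)
    (hproj : ∀ i, xplus i ∈ X i ∧ ∀ y ∈ X i, ‖w i - xplus i‖ ≤ ‖w i - y‖) :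
    ∀ z ∈ ⋂ i, X i, ∑ i, ‖xplus i - z‖ ≤ ∑ i, ‖x i - z‖ :=
  stmt5_general X hconv a hnonneg hrow hcol x w xplus hw hproj
end

section
/- Consider the projected consensus iteration x^i(k+1) = P_{X_i}[∑_j a^i_j(k) x^j(k)] with doubly stochastic weights at every step, where the intersection X = ∩_i X_i is nonempty. Define the projection errors e^i(k) = x^i(k+1) - ∑_j a^i_j(k) x^j(k). Then ∑_{k=0}^∞ ∑_{i=1}^m ||e^i(k)||^2 ≤ ∑_{i=1}^m ||x^i(0) - x||^2 for any x ∈ X; in particular e^i(k) → 0 as k → ∞ for every i. -/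
open Finset RealInnerProductSpace

lemma jensen_sq_aux {V : Type*} [NormedAddCommGroup V] [NormedSpace ℝ V] {ι : Type*} [Fintype ι]
    (a : ι → ℝ) (v : ι → V) (ha : ∀ j, 0 ≤ a j) (hs : ∑ j, a j = 1) :
    ‖∑ j, a j • v j‖ ^ 2 ≤ ∑ j, a j * ‖v j‖ ^ 2 := by
  have h1 : ‖∑ j, a j • v j‖ ≤ ∑ j, a j * ‖v j‖ := by
    refine (norm_sum_le _ _).trans_eq ?_
    simp [norm_smul, abs_of_nonneg (ha _)]
  have h2 : (∑ j, a j * ‖v j‖) ^ 2 ≤ ∑ j, a j * ‖v j‖ ^ 2 := by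
    have := Finset.sum_mul_sq_le_sq_mul_sq Finset.univ (fun j => Real.sqrt (a j))
      (fun j => Real.sqrt (a j) * ‖v j‖)
    have e1 : ∀ j : ι, Real.sqrt (a j) * (Real.sqrt (a j) * ‖v j‖) = a j * ‖v j‖ := by
      intro j
      rw [← mul_assoc, Real.mul_self_sqrt (ha j)]
    have e2 : ∀ j : ι, Real.sqrt (a j) ^ 2 = a j := fun j => Real.sq_sqrt (ha j)
    have e3 : ∀ j : ι, (Real.sqrt (a j) * ‖v j‖) ^ 2 = a j * ‖v j‖ ^ 2 := by
      intro j; rw [mul_pow, Real.sq_sqrt (ha j)]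
    simp only [e1, e2, e3, hs, one_mul] at this
    exact this
  calc ‖∑ j, a j • v j‖ ^ 2 ≤ (∑ j, a j * ‖v j‖) ^ 2 := by
        apply pow_le_pow_left₀ (norm_nonneg _) h1
    _ ≤ ∑ j, a j * ‖v j‖ ^ 2 := h2

lemma proj_ineq_aux {V : Type*} [NormedAddCommGroup V] [InnerProductSpace ℝ V] {K : Set V}
    (hK : Convex ℝ K) {u v z : V} (hv : v ∈ K) (hz : z ∈ K)
    (hmin : ∀ y ∈ K, ‖u - v‖ ≤ ‖u - y‖) :
    ‖v - z‖ ^ 2 + ‖u - v‖ ^ 2 ≤ ‖u - z‖ ^ 2 := by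
  haveI : Nonempty K := ⟨⟨v, hv⟩⟩
  have hinf : ‖u - v‖ = ⨅ y : K, ‖u - (y : V)‖ := by
    apply le_antisymm
    · exact le_ciInf fun y => hmin y y.2
    · have hbdd : BddBelow (Set.range fun y : K => ‖u - (y : V)‖) := by
        refine ⟨0, ?_⟩
        rintro r ⟨y, rfl⟩
        exact norm_nonneg _
      exact ciInf_le hbdd ⟨v, hv⟩
  have hip : ⟪u - v, z - v⟫ ≤ 0 :=
    (norm_eq_iInf_iff_real_inner_le_zero hK hv).1 hinf z hz
  have hexp : ‖u - z‖ ^ 2 = ‖u - v‖ ^ 2 - 2 * ⟪u - v, z - v⟫ + ‖z - v‖ ^ 2 := by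
    have : u - z = (u - v) - (z - v) := by abel
    rw [this, @norm_sub_sq_real]
  have hrev : ‖z - v‖ = ‖v - z‖ := norm_sub_rev _ _
  rw [hexp, hrev]
  nlinarith [hip]

theorem stmt6 {n m : ℕ} (X : Fin m → Set (EuclideanSpace ℝ (Fin n)))
    (hne : ∀ i, (X i).Nonempty) (hcl : ∀ i, IsClosed (X i)) (hconv : ∀ i, Convex ℝ (X i))
    (hXne : (⋂ i, X i).Nonempty)
    (a : ℕ → Fin m → Fin m → ℝ) (hnonneg : ∀ k i j, 0 ≤ a k i j)
    (hrow : ∀ k i, ∑ j, a k i j = 1) (hcol : ∀ k j, ∑ i, a k i j = 1)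
    (x : ℕ → Fin m → EuclideanSpace ℝ (Fin n))
    (w : ℕ → Fin m → EuclideanSpace ℝ (Fin n))
    (hw : ∀ k i, w k i = ∑ j, a k i j • x k j)
    (hproj : ∀ k i, x (k + 1) i ∈ X i ∧ ∀ y ∈ X i, ‖w k i - x (k + 1) i‖ ≤ ‖w k i - y‖)
    (e : ℕ → Fin m → EuclideanSpace ℝ (Fin n))
    (he : ∀ k i, e k i = x (k + 1) i - w k i) :
    (∀ z ∈ ⋂ i, X i, ∑' k : ℕ, ∑ i, ‖e k i‖ ^ 2 ≤ ∑ i, ‖x 0 i - z‖ ^ 2) ∧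
      (∀ i, Filter.Tendsto (fun k => e k i) Filter.atTop (nhds 0)) := by
  -- key recursion for any z in the intersection
  have key : ∀ z ∈ ⋂ i, X i, ∀ k,
      (∑ i, ‖e k i‖ ^ 2) + (∑ i, ‖x (k+1) i - z‖ ^ 2) ≤ ∑ i, ‖x k i - z‖ ^ 2 := by
    intro z hz k
    have hzi : ∀ i, z ∈ X i := fun i => Set.mem_iInter.1 hz i
    have step1 : ∀ i, ‖x (k+1) i - z‖ ^ 2 + ‖e k i‖ ^ 2 ≤ ‖w k i - z‖ ^ 2 := by
      intro i
      have h := proj_ineq_aux (hconv i) (hproj k i).1 (hzi i) (hproj k i).2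
      have : ‖e k i‖ = ‖w k i - x (k+1) i‖ := by
        rw [he, norm_sub_rev]
      rw [this]; exact h
    have step2 : ∀ i, ‖w k i - z‖ ^ 2 ≤ ∑ j, a k i j * ‖x k j - z‖ ^ 2 := by
      intro i
      have hwz : w k i - z = ∑ j, a k i j • (x k j - z) := by
        rw [hw]
        simp only [smul_sub]
        rw [Finset.sum_sub_distrib, ← Finset.sum_smul, hrow, one_smul]
      rw [hwz]
      exact jensen_sq_aux (a k i) (fun j => x k j - z) (fun j => hnonneg k i j) (hrow k i)
    have sum2 : ∑ i, ‖w k i - z‖ ^ 2 ≤ ∑ i, ‖x k i - z‖ ^ 2 := by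
      calc ∑ i, ‖w k i - z‖ ^ 2 ≤ ∑ i, ∑ j, a k i j * ‖x k j - z‖ ^ 2 :=
            Finset.sum_le_sum fun i _ => step2 i
        _ = ∑ j, (∑ i, a k i j) * ‖x k j - z‖ ^ 2 := by
            rw [Finset.sum_comm]
            simp [Finset.sum_mul]
        _ = ∑ i, ‖x k i - z‖ ^ 2 := by simp [hcol]
    have sum1 : (∑ i, ‖x (k+1) i - z‖ ^ 2) + (∑ i, ‖e k i‖ ^ 2) ≤ ∑ i, ‖w k i - z‖ ^ 2 := by
      rw [← Finset.sum_add_distrib]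
      exact Finset.sum_le_sum fun i _ => step1 i
    linarith
  have Enonneg : ∀ k, 0 ≤ ∑ i, ‖e k i‖ ^ 2 := fun k =>
    Finset.sum_nonneg fun i _ => sq_nonneg _
  have partial_le : ∀ z ∈ ⋂ i, X i, ∀ N,
      ∑ k ∈ Finset.range N, ∑ i, ‖e k i‖ ^ 2 ≤ ∑ i, ‖x 0 i - z‖ ^ 2 := by
    intro z hz N
    have tele : ∀ N, (∑ k ∈ Finset.range N, ∑ i, ‖e k i‖ ^ 2) + (∑ i, ‖x N i - z‖ ^ 2)
        ≤ ∑ i, ‖x 0 i - z‖ ^ 2 := by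
      intro N
      induction N with
      | zero => simp
      | succ N ih =>
        rw [Finset.sum_range_succ]
        have := key z hz N
        linarith
    have hN : 0 ≤ ∑ i, ‖x N i - z‖ ^ 2 := Finset.sum_nonneg fun i _ => sq_nonneg _
    linarith [tele N]
  obtain ⟨z0, hz0⟩ := hXne
  constructor
  · intro z hz
    exact Real.tsum_le_of_sum_range_le Enonneg (partial_le z hz)
  · intro i
    have hsummable : Summable (fun k => ∑ i, ‖e k i‖ ^ 2) :=
      summable_of_sum_range_le Enonneg (partial_le z0 hz0)
    have hEtend : Filter.Tendsto (fun k => ∑ i, ‖e k i‖ ^ 2) Filter.atTop (nhds 0) :=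
      hsummable.tendsto_atTop_zero
    have hsq : Filter.Tendsto (fun k => ‖e k i‖ ^ 2) Filter.atTop (nhds 0) := by
      exact squeeze_zero (fun k => sq_nonneg _)
        (fun k => Finset.single_le_sum (fun j _ => sq_nonneg (‖e k j‖)) (Finset.mem_univ i)) hEtend
    have hnorm : Filter.Tendsto (fun k => ‖e k i‖) Filter.atTop (nhds 0) := by
      have h2 := hsq.sqrt
      rw [Real.sqrt_zero] at h2
      have heq : (fun k => Real.sqrt (‖e k i‖ ^ 2)) = fun k => ‖e k i‖ := by
        funext k; exact Real.sqrt_sq (norm_nonneg _)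
      rwa [heq] at h2
    exact tendsto_zero_iff_norm_tendsto_zero.2 hnorm
end

section
/- Let Y be a nonempty closed convex set in R^n and let {u(k)} be a sequence in R^n converging to some ỹ ∈ Y such that ||u(k+1) - y|| ≤ ||u(k) - y|| for all y ∈ Y and all k (Fejér monotonicity with respect to Y). Then ||u(k) - ỹ|| ≤ 2 dist(u(k), Y) for all k ≥ 0. -/
theorem stmt7 {n : ℕ} (Y : Set (EuclideanSpace ℝ (Fin n)))
    (hne : Y.Nonempty) (hcl : IsClosed Y) (hconv : Convex ℝ Y)
    (u : ℕ → EuclideanSpace ℝ (Fin n)) (ytil : EuclideanSpace ℝ (Fin n))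
    (hytil : ytil ∈ Y) (hlim : Filter.Tendsto u Filter.atTop (nhds ytil))
    (hfejer : ∀ y ∈ Y, ∀ k : ℕ, ‖u (k + 1) - y‖ ≤ ‖u k - y‖) :
    ∀ k : ℕ, ‖u k - ytil‖ ≤ 2 * Metric.infDist (u k) Y := by
  intro k
  have mono : ∀ y ∈ Y, ∀ m, k ≤ m → ‖u m - y‖ ≤ ‖u k - y‖ := by
    intro y hy m hm
    induction m with
    | zero => simp_all
    | succ m ih =>
      rcases Nat.lt_or_ge k (m+1) with h | h
      · exact (hfejer y hy m).trans (ih (Nat.lt_succ_iff.mp h))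
      · have : k = m + 1 := le_antisymm hm h
        rw [this]
  -- limit: ‖ytil - y‖ ≤ ‖u k - y‖ for y ∈ Y
  have key : ∀ y ∈ Y, ‖u k - ytil‖ / 2 ≤ dist (u k) y := by
    intro y hy
    have hlim' : Filter.Tendsto (fun m => ‖u m - y‖) Filter.atTop (nhds ‖ytil - y‖) :=
      ((hlim.sub tendsto_const_nhds).norm)
    have hle : ‖ytil - y‖ ≤ ‖u k - y‖ :=
      le_of_tendsto hlim' (Filter.eventually_atTop.mpr ⟨k, fun m hm => mono y hy m hm⟩)
    have tri : ‖u k - ytil‖ ≤ ‖u k - y‖ + ‖y - ytil‖ := norm_sub_le_norm_sub_add_norm_sub _ _ _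
    have : ‖y - ytil‖ = ‖ytil - y‖ := norm_sub_rev _ _
    rw [dist_eq_norm]
    linarith
  have hinf : ‖u k - ytil‖ / 2 ≤ Metric.infDist (u k) Y := by
    rw [Metric.infDist_eq_iInf]
    have : Nonempty Y := hne.to_subtype
    exact le_ciInf fun y => key y y.2
  linarith
end

section
/- Let X_1,...,X_m be nonempty closed convex subsets of R^n with nonempty intersection X, let f_i : R^n → R be convex functions, and consider the projected subgradient iteration v^i(k) = ∑_j a^i_j(k) x^j(k), x^i(k+1) = P_{X_i}[v^i(k) - α_k d_i(k)] where d_i(k) ∈ ∂f_i(v^i(k)), with doubly stochastic weights and stepsize α_k > 0. Define φ^i(k) = x^i(k+1) - (v^i(k) - α_k d_i(k)). Then for any z ∈ X and all k: ∑_i ||x^i(k+1) - z||^2 ≤ ∑_i ||x^i(k) - z||^2 + α_k^2 ∑_i ||d_i(k)||^2 - 2α_k ∑_i (f_i(v^i(k)) - f_i(z)) - ∑_i ||φ^i(k)||^2. -/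
open RealInnerProductSpace

section aux

variable {E : Type*} [NormedAddCommGroup E] [InnerProductSpace ℝ E]

/-- Jensen-type inequality for squared norms of convex combinations. -/
lemma jensen_sq_norm {m : ℕ} (a : Fin m → ℝ) (y : Fin m → E)
    (hnn : ∀ j, 0 ≤ a j) (hsum : ∑ j, a j = 1) :
    ‖∑ j, a j • y j‖ ^ 2 ≤ ∑ j, a j * ‖y j‖ ^ 2 := by
  have h1 : ‖∑ j, a j • y j‖ ≤ ∑ j, a j * ‖y j‖ := by
    refine (norm_sum_le _ _).trans (le_of_eq ?_)
    refine Finset.sum_congr rfl fun j _ => ?_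
    rw [norm_smul, Real.norm_eq_abs, abs_of_nonneg (hnn j)]
  have h2 : (∑ j, a j * ‖y j‖) ^ 2 ≤ ∑ j, a j * ‖y j‖ ^ 2 := by
    have := Finset.sum_sq_le_sum_mul_sum_of_sq_eq_mul (Finset.univ : Finset (Fin m))
      (r := fun j => a j * ‖y j‖) (f := fun j => a j) (g := fun j => a j * ‖y j‖ ^ 2)
      (fun j _ => hnn j) (fun j _ => mul_nonneg (hnn j) (sq_nonneg _))
      (fun j _ => by ring)
    rwa [hsum, one_mul] at this
  calc ‖∑ j, a j • y j‖ ^ 2 ≤ (∑ j, a j * ‖y j‖) ^ 2 := by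
        apply pow_le_pow_left₀ (norm_nonneg _) h1
    _ ≤ ∑ j, a j * ‖y j‖ ^ 2 := h2

/-- Projection inequality: if `p` minimizes distance from `u` to convex `K` and `z ∈ K`,
then `‖p - z‖² + ‖u - p‖² ≤ ‖u - z‖²`. -/
lemma proj_ineq {K : Set E} (hK : Convex ℝ K) {u p z : E} (hp : p ∈ K) (hz : z ∈ K)
    (hmin : ∀ y ∈ K, ‖u - p‖ ≤ ‖u - y‖) :
    ‖p - z‖ ^ 2 + ‖u - p‖ ^ 2 ≤ ‖u - z‖ ^ 2 := by
  haveI : Nonempty K := ⟨⟨p, hp⟩⟩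
  have heq : ‖u - p‖ = ⨅ w : K, ‖u - w‖ := by
    apply le_antisymm
    · exact le_ciInf fun w => hmin w w.2
    · exact ciInf_le ⟨0, fun _ ⟨_, h⟩ => h ▸ norm_nonneg _⟩ (⟨p, hp⟩ : K)
  have hvar : ⟪u - p, z - p⟫ ≤ 0 :=
    ((norm_eq_iInf_iff_real_inner_le_zero hK hp).1 heq) z hz
  have hdecomp : u - z = (u - p) - (z - p) := by abel
  have : ‖u - z‖ ^ 2 = ‖u - p‖ ^ 2 - 2 * ⟪u - p, z - p⟫ + ‖z - p‖ ^ 2 := by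
    rw [hdecomp, @norm_sub_sq_real]
  rw [norm_sub_rev z p] at this
  linarith [hvar]

end aux

theorem stmt10 {n m : ℕ} (X : Fin m → Set (EuclideanSpace ℝ (Fin n)))
    (hne : ∀ i, (X i).Nonempty) (hcl : ∀ i, IsClosed (X i)) (hconv : ∀ i, Convex ℝ (X i))
    (hXne : (⋂ i, X i).Nonempty)
    (f : Fin m → EuclideanSpace ℝ (Fin n) → ℝ)
    (hf : ∀ i, ConvexOn ℝ Set.univ (f i))
    (a : ℕ → Fin m → Fin m → ℝ) (hnonneg : ∀ k i j, 0 ≤ a k i j)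
    (hrow : ∀ k i, ∑ j, a k i j = 1) (hcol : ∀ k j, ∑ i, a k i j = 1)
    (α : ℕ → ℝ) (hα : ∀ k, 0 < α k)
    (x v : ℕ → Fin m → EuclideanSpace ℝ (Fin n))
    (d : ℕ → Fin m → EuclideanSpace ℝ (Fin n))
    (hv : ∀ k i, v k i = ∑ j, a k i j • x k j)
    (hd : ∀ k i, ∀ y, f i (v k i) + ⟪d k i, y - v k i⟫ ≤ f i y)
    (hproj : ∀ k i, x (k + 1) i ∈ X i ∧
      ∀ y ∈ X i, ‖v k i - α k • d k i - x (k + 1) i‖ ≤ ‖v k i - α k • d k i - y‖)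
    (φ : ℕ → Fin m → EuclideanSpace ℝ (Fin n))
    (hφ : ∀ k i, φ k i = x (k + 1) i - (v k i - α k • d k i)) :
    ∀ z ∈ ⋂ i, X i, ∀ k : ℕ,
      ∑ i, ‖x (k + 1) i - z‖ ^ 2 ≤ ∑ i, ‖x k i - z‖ ^ 2
        + (α k) ^ 2 * ∑ i, ‖d k i‖ ^ 2
        - 2 * α k * ∑ i, (f i (v k i) - f i z)
        - ∑ i, ‖φ k i‖ ^ 2 := by
  intro z hz k
  have hzX : ∀ i, z ∈ X i := fun i => Set.mem_iInter.1 hz i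
  -- per-coordinate inequality
  have key : ∀ i, ‖x (k + 1) i - z‖ ^ 2 ≤
      (∑ j, a k i j * ‖x k j - z‖ ^ 2) + (α k) ^ 2 * ‖d k i‖ ^ 2
        - 2 * α k * (f i (v k i) - f i z) - ‖φ k i‖ ^ 2 := by
    intro i
    -- projection inequality
    have hp := proj_ineq (hconv i) (hproj k i).1 (hzX i) (hproj k i).2
    have hφn : ‖φ k i‖ = ‖v k i - α k • d k i - x (k + 1) i‖ := by
      rw [hφ k i, ← norm_neg]; congr 1; abel
    -- expand ‖u - z‖²
    have hexp : ‖v k i - α k • d k i - z‖ ^ 2 = ‖v k i - z‖ ^ 2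
        - 2 * (α k * ⟪v k i - z, d k i⟫) + (α k) ^ 2 * ‖d k i‖ ^ 2 := by
      have h0 : v k i - α k • d k i - z = (v k i - z) - α k • d k i := by abel
      rw [h0, @norm_sub_sq_real, real_inner_smul_right, norm_smul, Real.norm_eq_abs,
        abs_of_pos (hα k), mul_pow]
    -- subgradient inequality
    have hsub : f i (v k i) - f i z ≤ ⟪v k i - z, d k i⟫ := by
      have := hd k i z
      have hsymm : ⟪d k i, z - v k i⟫ = -⟪v k i - z, d k i⟫ := by
        rw [real_inner_comm]
        rw [show z - v k i = -(v k i - z) by abel, inner_neg_left]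
      linarith [this, hsymm.le, hsymm.ge]
    -- Jensen
    have hj : ‖v k i - z‖ ^ 2 ≤ ∑ j, a k i j * ‖x k j - z‖ ^ 2 := by
      have hvz : v k i - z = ∑ j, a k i j • (x k j - z) := by
        have h1 : ∑ j, a k i j • (x k j - z)
            = (∑ j, a k i j • x k j) - (∑ j, a k i j) • z := by
          rw [Finset.sum_smul, ← Finset.sum_sub_distrib]
          simp [smul_sub]
        rw [hv k i, h1, hrow k i, one_smul]
      calc ‖v k i - z‖ ^ 2 = ‖∑ j, a k i j • (x k j - z)‖ ^ 2 := by rw [hvz]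
        _ ≤ ∑ j, a k i j * ‖x k j - z‖ ^ 2 :=
            jensen_sq_norm _ _ (hnonneg k i) (hrow k i)
    have hφ2 : ‖φ k i‖ ^ 2 = ‖v k i - α k • d k i - x (k + 1) i‖ ^ 2 := by rw [hφn]
    have hterm : 2 * α k * (f i (v k i) - f i z) ≤ 2 * α k * ⟪v k i - z, d k i⟫ :=
      mul_le_mul_of_nonneg_left hsub (by linarith [hα k])
    linarith [hp, hexp, hj, hφ2, hterm]
  -- sum up
  calc ∑ i, ‖x (k + 1) i - z‖ ^ 2
      ≤ ∑ i, ((∑ j, a k i j * ‖x k j - z‖ ^ 2) + (α k) ^ 2 * ‖d k i‖ ^ 2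
          - 2 * α k * (f i (v k i) - f i z) - ‖φ k i‖ ^ 2) :=
        Finset.sum_le_sum fun i _ => key i
    _ = (∑ i, ∑ j, a k i j * ‖x k j - z‖ ^ 2) + (α k) ^ 2 * ∑ i, ‖d k i‖ ^ 2
          - 2 * α k * ∑ i, (f i (v k i) - f i z) - ∑ i, ‖φ k i‖ ^ 2 := by
        simp only [Finset.sum_add_distrib, Finset.sum_sub_distrib, Finset.mul_sum]
        rw [← Finset.sum_sub_distrib, Finset.mul_sum]
    _ = (∑ j, ‖x k j - z‖ ^ 2) + (α k) ^ 2 * ∑ i, ‖d k i‖ ^ 2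
          - 2 * α k * ∑ i, (f i (v k i) - f i z) - ∑ i, ‖φ k i‖ ^ 2 := by
        congr 1
        congr 1
        congr 1
        rw [Finset.sum_comm]
        refine Finset.sum_congr rfl fun j _ => ?_
        rw [← Finset.sum_mul, hcol k j, one_mul]
end

section
/- Let X_1, X_2 be nonempty closed convex sets in R^n whose intersection contains a ball of radius δ around x̄, with all points of X_1 ∪ X_2 bounded in norm by B. For any x^1 ∈ X_1, x^2 ∈ X_2, with x̂ = (x^1 + x^2)/2 and ε = dist(x̂, X_1) + dist(x̂, X_2), the vector s = (ε/(ε+δ)) x̄ + (δ/(ε+δ)) x̂ satisfies ||x̂ - s|| ≤ (2B/δ)(dist(x̂, X_1) + dist(x̂, X_2)). -/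
theorem stmt14 {n : ℕ} (X₁ X₂ : Set (EuclideanSpace ℝ (Fin n)))
    (hne₁ : X₁.Nonempty) (hne₂ : X₂.Nonempty)
    (hcl₁ : IsClosed X₁) (hcl₂ : IsClosed X₂)
    (hconv₁ : Convex ℝ X₁) (hconv₂ : Convex ℝ X₂)
    (δ B : ℝ) (hδ : 0 < δ) (xbar : EuclideanSpace ℝ (Fin n))
    (hball : Metric.closedBall xbar δ ⊆ X₁ ∩ X₂)
    (hB : ∀ x ∈ X₁ ∪ X₂, ‖x‖ ≤ B)
    (x₁ x₂ : EuclideanSpace ℝ (Fin n)) (hx₁ : x₁ ∈ X₁) (hx₂ : x₂ ∈ X₂)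
    (xhat : EuclideanSpace ℝ (Fin n)) (hxhat : xhat = (2 : ℝ)⁻¹ • (x₁ + x₂))
    (ε : ℝ) (hε : ε = Metric.infDist xhat X₁ + Metric.infDist xhat X₂)
    (s : EuclideanSpace ℝ (Fin n))
    (hs : s = (ε / (ε + δ)) • xbar + (δ / (ε + δ)) • xhat) :
    ‖xhat - s‖ ≤ (2 * B / δ) * (Metric.infDist xhat X₁ + Metric.infDist xhat X₂) := by
  have hε0 : 0 ≤ ε := by
    rw [hε]; exact add_nonneg (Metric.infDist_nonneg) (Metric.infDist_nonneg)
  have hεδ : 0 < ε + δ := by linarith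
  have hxbar : xbar ∈ X₁ := (hball (by simp [hδ.le])).1
  have hB1 : ‖x₁‖ ≤ B := hB x₁ (Or.inl hx₁)
  have hB2 : ‖x₂‖ ≤ B := hB x₂ (Or.inr hx₂)
  have hBbar : ‖xbar‖ ≤ B := hB xbar (Or.inl hxbar)
  have hB0 : 0 ≤ B := le_trans (norm_nonneg _) hB1
  have hxhatB : ‖xhat‖ ≤ B := by
    rw [hxhat]
    calc ‖(2 : ℝ)⁻¹ • (x₁ + x₂)‖ = 2⁻¹ * ‖x₁ + x₂‖ := by
          rw [norm_smul]; norm_num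
      _ ≤ 2⁻¹ * (‖x₁‖ + ‖x₂‖) := by
          have := norm_add_le x₁ x₂; nlinarith
      _ ≤ B := by linarith
  have key : xhat - s = (ε / (ε + δ)) • (xhat - xbar) := by
    rw [hs]
    have h1 : ε / (ε + δ) + δ / (ε + δ) = 1 := by field_simp
    rw [smul_sub]
    have : xhat = (ε / (ε + δ)) • xhat + (δ / (ε + δ)) • xhat := by
      rw [← add_smul, h1, one_smul]
    nth_rewrite 1 [this]
    abel
  have hnorm : ‖xhat - s‖ = (ε / (ε + δ)) * ‖xhat - xbar‖ := by
    rw [key, norm_smul, Real.norm_eq_abs, abs_of_nonneg (by positivity)]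
  have hdist : ‖xhat - xbar‖ ≤ 2 * B := by
    calc ‖xhat - xbar‖ ≤ ‖xhat‖ + ‖xbar‖ := norm_sub_le _ _
      _ ≤ 2 * B := by linarith
  rw [hnorm, ← hε]
  calc (ε / (ε + δ)) * ‖xhat - xbar‖ ≤ (ε / (ε + δ)) * (2 * B) := by
        apply mul_le_mul_of_nonneg_left hdist (by positivity)
    _ ≤ (ε / δ) * (2 * B) := by
        apply mul_le_mul_of_nonneg_right _ (by positivity)
        exact div_le_div_of_nonneg_left hε0 hδ (by linarith)
    _ = 2 * B / δ * ε := by ring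
end

section
/- Suppose {x^i(k)} for i = 1,...,m are sequences in R^n such that for every z in a nonempty set X* the scalar sequence ∑_i ||x^i(k) - z||^2 is convergent, and there is a sequence y(k) with ||x^i(k) - y(k)|| → 0 for all i and such that {y(k)} has a limit point x* ∈ X*. Then every sequence x^i(k) converges to x*. -/
theorem stmt15 {n m : ℕ} (Xstar : Set (EuclideanSpace ℝ (Fin n))) (hne : Xstar.Nonempty)
    (x : ℕ → Fin m → EuclideanSpace ℝ (Fin n))
    (h1 : ∀ z ∈ Xstar, ∃ c : ℝ,
      Filter.Tendsto (fun k => ∑ i, ‖x k i - z‖ ^ 2) Filter.atTop (nhds c))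
    (y : ℕ → EuclideanSpace ℝ (Fin n))
    (h2 : ∀ i, Filter.Tendsto (fun k => ‖x k i - y k‖) Filter.atTop (nhds 0))
    (xstar : EuclideanSpace ℝ (Fin n)) (hxstar : xstar ∈ Xstar)
    (hlp : ∃ φ : ℕ → ℕ, StrictMono φ ∧
      Filter.Tendsto (fun k => y (φ k)) Filter.atTop (nhds xstar)) :
    ∀ i, Filter.Tendsto (fun k => x k i) Filter.atTop (nhds xstar) := by
  obtain ⟨c, hc⟩ := h1 xstar hxstar
  obtain ⟨φ, hφ, hyφ⟩ := hlp
  -- y(φ k) - xstar tends to 0 in norm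
  have hyn : Filter.Tendsto (fun k => ‖y (φ k) - xstar‖) Filter.atTop (nhds 0) := by
    rw [← tendsto_iff_norm_sub_tendsto_zero] ; exact hyφ
  -- each x (φ k) i - xstar tends to 0 in norm
  have hxn : ∀ i, Filter.Tendsto (fun k => ‖x (φ k) i - xstar‖) Filter.atTop (nhds 0) := by
    intro i
    have h := ((h2 i).comp (hφ.tendsto_atTop)).add hyn
    rw [add_zero] at h
    refine squeeze_zero (fun k => norm_nonneg _) (fun k => ?_) h
    calc ‖x (φ k) i - xstar‖ = ‖(x (φ k) i - y (φ k)) + (y (φ k) - xstar)‖ := by rw [sub_add_sub_cancel]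
      _ ≤ ‖x (φ k) i - y (φ k)‖ + ‖y (φ k) - xstar‖ := norm_add_le _ _
  -- sum along subsequence tends to 0
  have hsum0 : Filter.Tendsto (fun k => ∑ i, ‖x (φ k) i - xstar‖ ^ 2) Filter.atTop (nhds 0) := by
    have : Filter.Tendsto (fun k => ∑ i : Fin m, ‖x (φ k) i - xstar‖ ^ 2) Filter.atTop
        (nhds (∑ i : Fin m, (0:ℝ))) := by
      exact tendsto_finset_sum _ (fun i _ => by simpa using ((hxn i).pow 2))
    simpa using this
  have hsumc : Filter.Tendsto (fun k => ∑ i, ‖x (φ k) i - xstar‖ ^ 2) Filter.atTop (nhds c) :=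
    hc.comp hφ.tendsto_atTop
  have hc0 : c = 0 := tendsto_nhds_unique hsumc hsum0
  rw [hc0] at hc
  intro i
  rw [tendsto_iff_norm_sub_tendsto_zero]
  have hsq : Filter.Tendsto (fun k => ‖x k i - xstar‖ ^ 2) Filter.atTop (nhds 0) := by
    refine squeeze_zero (fun k => by positivity) (fun k => ?_) hc
    exact Finset.single_le_sum (f := fun j => ‖x k j - xstar‖ ^ 2)
      (fun j _ => by positivity) (Finset.mem_univ i)
  have := hsq.sqrt
  simpa [Real.sqrt_sq (norm_nonneg _), Real.sqrt_zero] using this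
end
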